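/- Let α > 0, let f ∈ L¹[−π,π] with f ≥ 0, let b ∈ (−π,0) ∪ (0,π), let f_H be the polarization of f with respect to b, and let u_f and u_{f_H} be the solutions of the Robin problem with heat sources f and f_H respectively. Set J = [−π,b] if b > 0 and J = [b,π] if b < 0. Then u_f(x) ≤ u_{f_H}(x) for every x ∈ J. Moreover, the following are equivalent: (i) u_f(x) = u_{f_H}(x) for some x ∈ J; (ii) u_f(x) = u_{f_H}(x) for every x ∈ J; (iii) f = f_H almost everywhere on [−π,π]; (iv) u_f = u_{f_H} identically on [−π,π]. -/

import Mathlib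

open MeasureTheory Real Set

/-- The constant `c_α = α/(1+απ)`. -/
noncomputable def cA (α : ℝ) : ℝ := α / (1 + α * π)

/-- The Green's function of the Robin problem on `[-π, π]`. -/
noncomputable def robinGreen (α x y : ℝ) : ℝ :=
  -(1/2) * cA α * x * y - (1/2) * |x - y| + 1 / (2 * cA α)

/-- The solution of the Robin problem with heat source `f`. -/
noncomputable def robinSol (α : ℝ) (f : ℝ → ℝ) (x : ℝ) : ℝ :=
  ∫ y in (-π)..π, robinGreen α x y * f y

/-- The polarization (towards zero) of `f : [-π,π] → ℝ` with respect to `b`. -/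
noncomputable def polar (b : ℝ) (f : ℝ → ℝ) (x : ℝ) : ℝ :=
  if 0 < b then
    if x < 2 * b - π then f x
    else if x ≤ b then max (f x) (f (2 * b - x))
    else min (f x) (f (2 * b - x))
  else
    if x ≤ b then min (f x) (f (2 * b - x))
    else if x ≤ 2 * b + π then max (f x) (f (2 * b - x))
    else f x

/-!
For `0 < b` put `a = 2b - π` and `h = f_H - f`. Then `h` vanishes left of `a`, is nonnegative
on `[a, b]`, and is odd under the reflection `y ↦ 2b - y`, which maps `[a, b]` onto `[b, π]`.
Folding the integral over `[b, π]` onto `[a, b]` gives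
`u_{f_H}(x) - u_f(x) = ∫_a^b (G(x,y) - G(x,2b-y)) h(y) dy`, and for `x ∈ [-π, b]` the folded
kernel `c_α x (b - y) + b - max x y` is positive for `y < b` because `c_α π < 1`. Hence
`u_f ≤ u_{f_H}` on `J`, and equality at a single point of `J` forces `h = 0` a.e. on `[a, b]`,
hence on `[-π, π]` by oddness. The case `b < 0` is the mirror image under `x ↦ -x`.
-/

lemma cA_pos {α : ℝ} (hα : 0 < α) : 0 < cA α :=
  div_pos hα (by positivity)

lemma cA_mul_pi_lt_one {α : ℝ} (hα : 0 < α) : cA α * π < 1 := by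
  rw [cA, div_mul_eq_mul_div, div_lt_one (by positivity)]
  linarith

lemma continuous_robinGreen (α x : ℝ) : Continuous (robinGreen α x) := by
  unfold robinGreen
  fun_prop

lemma robinGreen_sub_reflect {α b x y : ℝ} (h : x + y ≤ 2 * b) :
    robinGreen α x y - robinGreen α x (2 * b - y) = cA α * x * (b - y) + b - max x y := by
  rw [robinGreen, robinGreen, abs_of_nonpos (a := x - (2 * b - y)) (by linarith)]
  rcases le_total x y with hxy | hxy
  · rw [abs_of_nonpos (sub_nonpos.2 hxy), max_eq_right hxy]; ring
  · rw [abs_of_nonneg (sub_nonneg.2 hxy), max_eq_left hxy]; ring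

lemma robinGreen_sub_reflect_pos {α b x y : ℝ} (hα : 0 < α) (hb : 0 < b)
    (hx : x ∈ Icc (-π) b) (hy : y ∈ Ico (2 * b - π) b) :
    0 < robinGreen α x y - robinGreen α x (2 * b - y) := by
  obtain ⟨hx₁, hx₂⟩ := hx
  obtain ⟨hy₁, hy₂⟩ := hy
  have hc := cA_pos hα
  have hcπ := cA_mul_pi_lt_one hα
  rw [robinGreen_sub_reflect (by linarith)]
  rcases le_total x y with hxy | hxy
  · rw [max_eq_right hxy]
    nlinarith [mul_nonneg hc.le (sub_nonneg.2 hx₁)]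
  · rw [max_eq_left hxy]
    rcases le_total x 0 with hx0 | hx0
    · nlinarith [mul_nonneg hc.le (neg_nonneg.2 hx0)]
    · nlinarith [mul_nonneg (mul_nonneg hc.le hx0) (sub_nonneg.2 hy₂.le),
        mul_pos (mul_pos hc hb) (sub_pos.2 hy₂)]

lemma robinGreen_sub_reflect_nonneg {α b x y : ℝ} (hα : 0 < α) (hb : 0 < b)
    (hx : x ∈ Icc (-π) b) (hy : y ∈ Icc (2 * b - π) b) :
    0 ≤ robinGreen α x y - robinGreen α x (2 * b - y) := by
  rcases hy.2.lt_or_eq with hyb | rfl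
  · exact (robinGreen_sub_reflect_pos hα hb hx ⟨hy.1, hyb⟩).le
  · rw [two_mul, add_sub_cancel_right, sub_self]

section Polarization

variable {b y : ℝ} {f : ℝ → ℝ}

lemma polar_of_lt (hb : 0 < b) (hy : y < 2 * b - π) : polar b f y = f y := by
  simp [polar, hb, hy]

lemma polar_of_mem_Icc (hb : 0 < b) (hy : y ∈ Icc (2 * b - π) b) :
    polar b f y = max (f y) (f (2 * b - y)) := by
  simp [polar, hb, not_lt.2 hy.1, hy.2]

lemma polar_of_gt (hb : 0 < b) (hbπ : b < π) (hy : b < y) :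
    polar b f y = min (f y) (f (2 * b - y)) := by
  simp [polar, hb, not_lt.2 (by linarith : 2 * b - π ≤ y), not_le.2 hy]

lemma polar_sub_eq_max_zero (hb : 0 < b) (hy : y ∈ Icc (2 * b - π) b) :
    polar b f y - f y = max (f (2 * b - y) - f y) 0 := by
  rw [polar_of_mem_Icc hb hy, ← max_sub_sub_right, sub_self, max_comm]

lemma polar_sub_nonneg (hb : 0 < b) (hy : y ∈ Icc (2 * b - π) b) : 0 ≤ polar b f y - f y :=
  polar_sub_eq_max_zero hb hy ▸ le_max_right _ _

lemma polar_sub_reflect (hb : 0 < b) (hbπ : b < π) (hy : y ∈ Icc (2 * b - π) b) :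
    polar b f (2 * b - y) - f (2 * b - y) = -(polar b f y - f y) := by
  rcases hy.2.lt_or_eq with hyb | rfl
  · rw [polar_of_gt hb hbπ (by linarith), sub_sub_cancel, polar_of_mem_Icc hb hy, min_comm]
    linarith [max_add_min (f y) (f (2 * b - y))]
  · rw [two_mul, add_sub_cancel_right, polar_of_mem_Icc hb hy, two_mul, add_sub_cancel_right,
      max_self, sub_self, neg_zero]

lemma intervalIntegrable_polar_sub {u v : ℝ} (hb : 0 < b) (hbπ : b < π)
    (hf : IntegrableOn f (Icc (-π) π)) (hu : u ∈ Icc (-π) π) (hv : v ∈ Icc (-π) π) :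
    IntervalIntegrable (polar b f - f) volume u v := by
  have hfi : ∀ {s t}, s ∈ Icc (-π) π → t ∈ Icc (-π) π → IntervalIntegrable f volume s t :=
    fun hs ht => (hf.mono_set (uIcc_subset_Icc hs ht)).intervalIntegrable
  have hbb : 2 * b - b = b := by ring
  -- `f (2b - y)` is only known to be integrable where `2b - y ∈ [-π, π]`, hence the three pieces.
  have hfσ : IntervalIntegrable (fun y => f (2 * b - y)) volume (2 * b - π) b := by
    have := ((hfi (s := b) ⟨by linarith, hbπ.le⟩ ⟨by linarith, le_rfl⟩).comp_sub_left (2 * b)).symm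
    rwa [hbb] at this
  have left : IntervalIntegrable (polar b f - f) volume (-π) (2 * b - π) :=
    (intervalIntegrable_const (c := (0 : ℝ))).congr_uIoo fun y hy => by
      rw [uIoo_of_le (by linarith)] at hy
      simp [polar_of_lt hb hy.2]
  have middle : IntervalIntegrable (polar b f - f) volume (2 * b - π) b := by
    have hd := hfσ.sub (hfi ⟨by linarith, by linarith⟩ ⟨by linarith, hbπ.le⟩)
    refine IntervalIntegrable.congr_uIoo ⟨hd.1.pos_part, hd.2.pos_part⟩ fun y hy => ?_
    rw [uIoo_of_le (by linarith)] at hy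
    simp [polar_sub_eq_max_zero hb (Ioo_subset_Icc_self hy)]
  have right : IntervalIntegrable (polar b f - f) volume b π := by
    have hσ := (middle.comp_sub_left (2 * b)).neg.symm
    rw [hbb, sub_sub_cancel] at hσ
    refine hσ.congr_uIoo fun y hy => ?_
    rw [uIoo_of_le hbπ.le] at hy
    have hy' : 2 * b - y ∈ Icc (2 * b - π) b := ⟨by linarith [hy.2], by linarith [hy.1]⟩
    have := polar_sub_reflect (f := f) hb hbπ hy'
    rw [sub_sub_cancel] at this
    simp [this]
  have hI : uIcc (-π) π = Icc (-π) π := uIcc_of_le (by linarith)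
  exact ((left.trans middle).trans right).mono_set (uIcc_subset_uIcc (hI ▸ hu) (hI ▸ hv))

end Polarization

lemma integral_mul_eq_integral_sub_reflect {g h : ℝ → ℝ} {a b : ℝ} (hab : a ≤ b)
    (hg : Continuous g) (hh : IntervalIntegrable h volume a (2 * b - a))
    (hanti : ∀ y ∈ Icc a b, h (2 * b - y) = -h y) :
    ∫ y in a..(2 * b - a), g y * h y = ∫ y in a..b, (g y - g (2 * b - y)) * h y := by
  have hb : b ∈ uIcc a (2 * b - a) := by rw [uIcc_of_le (by linarith)]; constructor <;> linarith
  have h₁ : IntervalIntegrable h volume a b := hh.mono_set (uIcc_subset_uIcc left_mem_uIcc hb)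
  have h₂ : IntervalIntegrable h volume b (2 * b - a) :=
    hh.mono_set (uIcc_subset_uIcc hb right_mem_uIcc)
  have hreflect : ∫ y in b..(2 * b - a), g y * h y = -∫ y in a..b, g (2 * b - y) * h y := by
    have := intervalIntegral.integral_comp_sub_left (a := a) (b := b) (fun y => g y * h y) (2 * b)
    rw [show 2 * b - b = b by ring] at this
    rw [← this, ← intervalIntegral.integral_neg]
    refine intervalIntegral.integral_congr fun y hy => ?_
    rw [uIcc_of_le hab] at hy
    simp only [hanti y hy, mul_neg]
  rw [← intervalIntegral.integral_add_adjacent_intervals (h₁.continuousOn_mul hg.continuousOn)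
      (h₂.continuousOn_mul hg.continuousOn), hreflect, ← sub_eq_add_neg,
    ← intervalIntegral.integral_sub (h₁.continuousOn_mul hg.continuousOn)
      (h₁.continuousOn_mul (by fun_prop : Continuous fun y => g (2 * b - y)).continuousOn)]
  simp only [sub_mul]

lemma robinSol_congr_ae {α : ℝ} {f g : ℝ → ℝ} (h : f =ᵐ[volume.restrict (Icc (-π) π)] g)
    (x : ℝ) :
    robinSol α f x = robinSol α g x := by
  refine intervalIntegral.integral_congr_ae ?_
  filter_upwards [(ae_restrict_iff' measurableSet_Icc).1 h] with y hy hy'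
  rw [uIoc_of_le (by linarith [pi_pos])] at hy'
  rw [hy (Ioc_subset_Icc_self hy')]

lemma robinSol_polar_sub_robinSol {b : ℝ} {f : ℝ → ℝ} (hb : 0 < b) (hbπ : b < π)
    (hf : IntegrableOn f (Icc (-π) π)) (α x : ℝ) :
    robinSol α (polar b f) x - robinSol α f x =
      ∫ y in (2 * b - π)..b,
        (robinGreen α x y - robinGreen α x (2 * b - y)) * (polar b f y - f y) := by
  have hh : ∀ {u v}, u ∈ Icc (-π) π → v ∈ Icc (-π) π →
      IntervalIntegrable (polar b f - f) volume u v :=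
    intervalIntegrable_polar_sub hb hbπ hf
  have hl : -π ∈ Icc (-π) π := ⟨le_rfl, by linarith⟩
  have hr : π ∈ Icc (-π) π := ⟨by linarith, le_rfl⟩
  have ha : 2 * b - π ∈ Icc (-π) π := ⟨by linarith, by linarith⟩
  have hfi : IntervalIntegrable f volume (-π) π :=
    (intervalIntegrable_iff_integrableOn_Icc_of_le (by linarith)).2 hf
  have hpi : IntervalIntegrable (polar b f) volume (-π) π := by
    simpa using (hh hl hr).add hfi
  have hG := continuous_robinGreen α x
  calc robinSol α (polar b f) x - robinSol α f x
      = ∫ y in (-π)..π, robinGreen α x y * (polar b f - f) y := by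
        rw [robinSol, robinSol, ← intervalIntegral.integral_sub
          (hpi.continuousOn_mul hG.continuousOn) (hfi.continuousOn_mul hG.continuousOn)]
        simp only [Pi.sub_apply, mul_sub]
    _ = ∫ y in (2 * b - π)..(2 * b - (2 * b - π)), robinGreen α x y * (polar b f - f) y := by
        rw [sub_sub_cancel, ← intervalIntegral.integral_add_adjacent_intervals
          ((hh hl ha).continuousOn_mul hG.continuousOn)
          ((hh ha hr).continuousOn_mul hG.continuousOn)]
        rw [intervalIntegral.integral_congr_Ioo_of_le (g := fun _ => 0) (by linarith) fun y hy => by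
          simp [polar_of_lt hb hy.2], intervalIntegral.integral_zero, zero_add]
    _ = _ := integral_mul_eq_integral_sub_reflect (by linarith) hG
        (by rw [sub_sub_cancel]; exact hh ha hr)
        fun y hy => polar_sub_reflect hb hbπ hy

section PositiveShift

variable {α b x : ℝ} {f : ℝ → ℝ}

lemma ae_eq_polar_of_ae_eq_on_Ioo (hb : 0 < b) (hbπ : b < π)
    (h : ∀ᵐ y, y ∈ Ioo (2 * b - π) b → polar b f y = f y) :
    f =ᵐ[volume.restrict (Icc (-π) π)] polar b f := by
  have hσ : ∀ᵐ y, 2 * b - y ∈ Ioo (2 * b - π) b → polar b f (2 * b - y) = f (2 * b - y) :=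
    (Measure.measurePreserving_sub_left volume (2 * b)).quasiMeasurePreserving.ae h
  rw [Filter.EventuallyEq, ae_restrict_iff' measurableSet_Icc]
  filter_upwards [h, hσ, volume.ae_ne (2 * b - π), volume.ae_ne b, volume.ae_ne π]
    with y hmid hright hya hyb hyπ hy
  rcases hya.lt_or_gt with hya | hya
  · exact (polar_of_lt hb hya).symm
  rcases hyb.lt_or_gt with hyb | hyb
  · exact (hmid ⟨hya, hyb⟩).symm
  · have hy' : 2 * b - y ∈ Ioo (2 * b - π) b :=
      ⟨by linarith [hyπ.lt_of_le hy.2], by linarith⟩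
    have := polar_sub_reflect (f := f) hb hbπ (Ioo_subset_Icc_self hy')
    rw [sub_sub_cancel, hright hy', sub_self] at this
    linarith

lemma robinSol_le_robinSol_polar_of_pos (hα : 0 < α) (hb : 0 < b) (hbπ : b < π)
    (hf : IntegrableOn f (Icc (-π) π)) (hx : x ∈ Icc (-π) b) :
    robinSol α f x ≤ robinSol α (polar b f) x := by
  rw [← sub_nonneg, robinSol_polar_sub_robinSol hb hbπ hf]
  exact intervalIntegral.integral_nonneg (by linarith) fun y hy =>
    mul_nonneg (robinGreen_sub_reflect_nonneg hα hb hx hy) (polar_sub_nonneg hb hy)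

lemma ae_eq_polar_of_robinSol_eq_of_pos (hα : 0 < α) (hb : 0 < b) (hbπ : b < π)
    (hf : IntegrableOn f (Icc (-π) π)) (hx : x ∈ Icc (-π) b)
    (heq : robinSol α f x = robinSol α (polar b f) x) :
    f =ᵐ[volume.restrict (Icc (-π) π)] polar b f := by
  have hab : 2 * b - π ≤ b := by linarith
  have hK : (fun y => (robinGreen α x y - robinGreen α x (2 * b - y)) * (polar b f y - f y))
      =ᵐ[volume.restrict (Ioc (2 * b - π) b)] 0 := by
    refine (intervalIntegral.integral_eq_zero_iff_of_le_of_nonneg_ae hab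
      (ae_restrict_of_forall_mem measurableSet_Ioc fun y hy => ?_) ?_).1 ?_
    · exact mul_nonneg (robinGreen_sub_reflect_nonneg hα hb hx (Ioc_subset_Icc_self hy))
        (polar_sub_nonneg hb (Ioc_subset_Icc_self hy))
    · have hG := continuous_robinGreen α x
      exact (intervalIntegrable_polar_sub hb hbπ hf ⟨by linarith, by linarith⟩
        ⟨by linarith, hbπ.le⟩).continuousOn_mul (by fun_prop)
    · rw [← robinSol_polar_sub_robinSol hb hbπ hf, heq, sub_self]
  refine ae_eq_polar_of_ae_eq_on_Ioo hb hbπ ?_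
  filter_upwards [(ae_restrict_iff' measurableSet_Ioc).1 hK] with y hy hy'
  have hker := robinGreen_sub_reflect_pos hα hb hx (Ioo_subset_Ico_self hy')
  exact sub_eq_zero.1 ((mul_eq_zero.1 (hy (Ioo_subset_Ioc_self hy'))).resolve_left hker.ne')

end PositiveShift

lemma robinGreen_neg_neg (α x y : ℝ) : robinGreen α (-x) (-y) = robinGreen α x y := by
  rw [robinGreen, robinGreen, show -x - -y = -(x - y) by ring, abs_neg]
  ring

lemma measurePreserving_neg_restrict_Icc (c : ℝ) :
    MeasurePreserving Neg.neg (volume.restrict (Icc (-c) c)) (volume.restrict (Icc (-c) c)) := by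
  simpa using (Measure.measurePreserving_neg (volume : Measure ℝ)).restrict_preimage
    (measurableSet_Icc (a := -c) (b := c))

lemma robinSol_comp_neg (α : ℝ) (f : ℝ → ℝ) (x : ℝ) :
    robinSol α (fun y => f (-y)) (-x) = robinSol α f x := by
  have h : ∀ y, robinGreen α (-x) y * f (-y) = robinGreen α x (-y) * f (-y) := fun y => by
    rw [← robinGreen_neg_neg α x (-y), neg_neg]
  rw [robinSol, robinSol]
  simp only [h]
  rw [intervalIntegral.integral_comp_neg (fun y => robinGreen α x y * f y), neg_neg]

section NegativeShift

variable {α b x : ℝ} {f : ℝ → ℝ}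

lemma polar_neg_comp_neg (hb : b < 0) (hbπ : -π < b) :
    polar (-b) (fun t => f (-t)) = fun y => polar b f (-y) := by
  funext y
  have hnb : ¬ 0 < b := hb.not_gt
  simp only [polar, if_pos (neg_pos.2 hb), if_neg hnb, show -(2 * -b - y) = 2 * b - -y by ring]
  by_cases h₁ : y < 2 * -b - π
  · rw [if_pos h₁, if_neg (by linarith : ¬ -y ≤ b),
      if_neg (by linarith : ¬ -y ≤ 2 * b + π)]
  rw [if_neg h₁]
  by_cases h₂ : y ≤ -b
  · rw [if_pos h₂]
    rcases h₂.lt_or_eq with h₂ | rfl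
    · rw [if_neg (by linarith : ¬ -y ≤ b), if_pos (by linarith : -y ≤ 2 * b + π)]
    · rw [neg_neg, if_pos le_rfl, show 2 * b - b = b by ring, max_self, min_self]
  · rw [if_neg h₂, if_pos (by linarith : -y ≤ b)]

lemma robinSol_polar_comp_neg (hb : b < 0) (hbπ : -π < b) :
    robinSol α (polar (-b) fun t => f (-t)) (-x) = robinSol α (polar b f) x := by
  rw [polar_neg_comp_neg hb hbπ, robinSol_comp_neg]

lemma robinSol_le_robinSol_polar_of_neg (hα : 0 < α) (hb : b < 0) (hbπ : -π < b)
    (hf : IntegrableOn f (Icc (-π) π)) (hx : x ∈ Icc b π) :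
    robinSol α f x ≤ robinSol α (polar b f) x := by
  have := robinSol_le_robinSol_polar_of_pos (x := -x) (f := fun t => f (-t)) hα (neg_pos.2 hb)
    (by linarith)
    ((measurePreserving_neg_restrict_Icc π).integrable_comp_of_integrable hf)
    ⟨by linarith [hx.2], by linarith [hx.1]⟩
  rwa [robinSol_comp_neg, robinSol_polar_comp_neg hb hbπ] at this

lemma ae_eq_polar_of_robinSol_eq_of_neg (hα : 0 < α) (hb : b < 0) (hbπ : -π < b)
    (hf : IntegrableOn f (Icc (-π) π)) (hx : x ∈ Icc b π)
    (heq : robinSol α f x = robinSol α (polar b f) x) :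
    f =ᵐ[volume.restrict (Icc (-π) π)] polar b f := by
  have hneg := measurePreserving_neg_restrict_Icc π
  have := ae_eq_polar_of_robinSol_eq_of_pos (x := -x) (f := fun t => f (-t)) hα (neg_pos.2 hb)
    (by linarith)
    (hneg.integrable_comp_of_integrable hf) ⟨by linarith [hx.2], by linarith [hx.1]⟩
    (by rwa [robinSol_comp_neg, robinSol_polar_comp_neg hb hbπ])
  rw [polar_neg_comp_neg hb hbπ] at this
  simpa [Function.comp_def] using hneg.quasiMeasurePreserving.ae_eq_comp this

end NegativeShift

theorem robinSol_le_polar_on_near_interval_general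
    (α : ℝ) (hα : 0 < α)
    (f : ℝ → ℝ) (hf : IntegrableOn f (Icc (-π) π))
    (b : ℝ) (hb : b ∈ Ioo (-π) 0 ∪ Ioo 0 π) :
    (∀ x ∈ (if 0 < b then Icc (-π) b else Icc b π),
      robinSol α f x ≤ robinSol α (polar b f) x) ∧
    ((∃ x ∈ (if 0 < b then Icc (-π) b else Icc b π),
        robinSol α f x = robinSol α (polar b f) x) ↔
      (∀ x ∈ (if 0 < b then Icc (-π) b else Icc b π),
        robinSol α f x = robinSol α (polar b f) x)) ∧
    ((∀ x ∈ (if 0 < b then Icc (-π) b else Icc b π),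
        robinSol α f x = robinSol α (polar b f) x) ↔
      f =ᵐ[volume.restrict (Icc (-π) π)] polar b f) ∧
    (f =ᵐ[volume.restrict (Icc (-π) π)] polar b f ↔
      EqOn (robinSol α f) (robinSol α (polar b f)) (Icc (-π) π)) := by
  set J := if 0 < b then Icc (-π) b else Icc b π
  obtain ⟨hbJ, hbI, hle, hae⟩ : b ∈ J ∧ b ∈ Icc (-π) π ∧
      (∀ x ∈ J, robinSol α f x ≤ robinSol α (polar b f) x) ∧
      ∀ x ∈ J, robinSol α f x = robinSol α (polar b f) x →
        f =ᵐ[volume.restrict (Icc (-π) π)] polar b f := by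
    rcases hb with ⟨hπb, hb⟩ | ⟨hb, hbπ⟩
    · simp only [J, if_neg hb.not_gt]
      exact ⟨⟨le_rfl, by linarith⟩, ⟨hπb.le, by linarith⟩,
        fun x hx => robinSol_le_robinSol_polar_of_neg hα hb hπb hf hx,
        fun x hx => ae_eq_polar_of_robinSol_eq_of_neg hα hb hπb hf hx⟩
    · simp only [J, if_pos hb]
      exact ⟨⟨by linarith, le_rfl⟩, ⟨by linarith, hbπ.le⟩,
        fun x hx => robinSol_le_robinSol_polar_of_pos hα hb hbπ hf hx,
        fun x hx => ae_eq_polar_of_robinSol_eq_of_pos hα hb hbπ hf hx⟩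
  refine ⟨hle, ⟨fun ⟨x, hx, h⟩ y _ => robinSol_congr_ae (hae x hx h) y,
      fun h => ⟨b, hbJ, h b hbJ⟩⟩,
    ⟨fun h => hae b hbJ (h b hbJ), fun h x _ => robinSol_congr_ae h x⟩,
    ⟨fun h x _ => robinSol_congr_ae h x, fun h => hae b hbJ (h hbI)⟩⟩

/-- **`u_f ≤ u_{f_H}` on the near interval `J`, with equivalent equality conditions.** -/
theorem robinSol_le_polar_on_near_interval
    (α : ℝ) (hα : 0 < α)
    (f : ℝ → ℝ) (hf : IntegrableOn f (Icc (-π) π))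
    (hf0 : ∀ x ∈ Icc (-π) π, 0 ≤ f x)
    (b : ℝ) (hb : b ∈ Ioo (-π) 0 ∪ Ioo 0 π) :
    (∀ x ∈ (if 0 < b then Icc (-π) b else Icc b π),
      robinSol α f x ≤ robinSol α (polar b f) x) ∧
    ((∃ x ∈ (if 0 < b then Icc (-π) b else Icc b π),
        robinSol α f x = robinSol α (polar b f) x) ↔
      (∀ x ∈ (if 0 < b then Icc (-π) b else Icc b π),
        robinSol α f x = robinSol α (polar b f) x)) ∧
    ((∀ x ∈ (if 0 < b then Icc (-π) b else Icc b π),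
        robinSol α f x = robinSol α (polar b f) x) ↔
      f =ᵐ[volume.restrict (Icc (-π) π)] polar b f) ∧
    (f =ᵐ[volume.restrict (Icc (-π) π)] polar b f ↔
      EqOn (robinSol α f) (robinSol α (polar b f)) (Icc (-π) π)) :=
  robinSol_le_polar_on_near_interval_general α hα f hf b hb
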